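/- Let 0 < λ < n. The Hardy–Littlewood maximal operator is bounded on the Zygmund–Morrey space M_{L(1+log⁺L),λ}(ℝⁿ) restricted to radially decreasing functions: there is c > 0 such that ‖Mf‖_{M_{L(1+log⁺L),λ}} ≤ c ‖f‖_{M_{L(1+log⁺L),λ}} for all radially decreasing measurable f on ℝⁿ. -/

import Mathlib

open MeasureTheory ENNReal Set

noncomputable section

/-- `ℝⁿ` with the Euclidean metric. -/
abbrev Rn (n : ℕ) : Type := EuclideanSpace ℝ (Fin n)

/-- The axis-parallel cube with center `c` and side length `h`. -/
def zCube {n : ℕ} (c : Rn n) (h : ℝ) : Set (Rn n) := {x | ∀ i, |x i - c i| ≤ h / 2}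

/-- `log⁺ t = max (log t) 0`. -/
def logPlus (t : ℝ) : ℝ := max (Real.log t) 0

/-- The Hardy–Littlewood maximal operator of an `ℝ≥0∞`-valued function:
`sup_{Q ∋ x} |Q|⁻¹ ∫_Q g`, the supremum over all axis-parallel cubes containing `x`. -/
def maxE {n : ℕ} (g : Rn n → ℝ≥0∞) (x : Rn n) : ℝ≥0∞ :=
  ⨆ (c : Rn n) (h : ℝ) (_ : 0 < h) (_ : x ∈ zCube c h),
    (ENNReal.ofReal (h ^ n))⁻¹ * ∫⁻ y in zCube c h, g y

/-- The Hardy–Littlewood maximal operator of a real function. -/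
def HLM {n : ℕ} (f : Rn n → ℝ) (x : Rn n) : ℝ≥0∞ :=
  maxE (fun y => ENNReal.ofReal |f y|) x

/-- The fractional maximal operator `M_α` applied to an `ℝ≥0∞`-valued function:
`sup_{Q ∋ x} |Q|^{(α-n)/n} ∫_Q g`. -/
def fracMaxE {n : ℕ} (α : ℝ) (g : Rn n → ℝ≥0∞) (x : Rn n) : ℝ≥0∞ :=
  ⨆ (c : Rn n) (h : ℝ) (_ : 0 < h) (_ : x ∈ zCube c h),
    ENNReal.ofReal (h ^ (α - (n : ℝ))) * ∫⁻ y in zCube c h, g y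

/-- The maximal commutator `C_b(f)(x) = sup_{Q ∋ x} |Q|⁻¹ ∫_Q |b x - b y| |f y| dy`. -/
def maxComm {n : ℕ} (b f : Rn n → ℝ) (x : Rn n) : ℝ≥0∞ :=
  ⨆ (c : Rn n) (h : ℝ) (_ : 0 < h) (_ : x ∈ zCube c h),
    (ENNReal.ofReal (h ^ n))⁻¹ * ∫⁻ y in zCube c h, ENNReal.ofReal (|b x - b y| * |f y|)

/-- The mean value `f_Q = |Q|⁻¹ ∫_Q f` of `f` over the cube with center `c`, side `h`. -/
def cubeMean {n : ℕ} (f : Rn n → ℝ) (c : Rn n) (h : ℝ) : ℝ :=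
  (h ^ n)⁻¹ * ∫ y in zCube c h, f y

/-- The mean oscillation `|Q|⁻¹ ∫_Q |b - b_Q|` of `b` over a cube. -/
def oscAvg {n : ℕ} (b : Rn n → ℝ) (c : Rn n) (h : ℝ) : ℝ≥0∞ :=
  (ENNReal.ofReal (h ^ n))⁻¹ * ∫⁻ y in zCube c h, ENNReal.ofReal |b y - cubeMean b c h|

/-- The BMO seminorm `‖b‖_* = sup_Q |Q|⁻¹ ∫_Q |b - b_Q|`. -/
def bmoNorm {n : ℕ} (b : Rn n → ℝ) : ℝ≥0∞ :=
  ⨆ (c : Rn n) (h : ℝ) (_ : 0 < h), oscAvg b c h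

/-- Morrey norm `‖g‖_{M_{p,λ}} = sup_{x, r>0} r^{(λ-n)/p} (∫_{B(x,r)} g^p)^{1/p}`
for an `ℝ≥0∞`-valued function. -/
def morreyE {n : ℕ} (p lam : ℝ) (g : Rn n → ℝ≥0∞) : ℝ≥0∞ :=
  ⨆ (x : Rn n) (r : ℝ) (_ : 0 < r),
    ENNReal.ofReal (r ^ ((lam - n) / p)) * (∫⁻ y in Metric.ball x r, g y ^ p) ^ (1 / p)

/-- Morrey norm of a real function. -/
def morrey {n : ℕ} (p lam : ℝ) (f : Rn n → ℝ) : ℝ≥0∞ :=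
  morreyE p lam (fun y => ENNReal.ofReal |f y|)

/-- The Zygmund function `Φ(t) = t (1 + log⁺ t)`, extended to `ℝ≥0∞`. -/
def zygFnE (t : ℝ≥0∞) : ℝ≥0∞ := t * (1 + ENNReal.ofReal (logPlus t.toReal))

/-- The Luxemburg-type `L(1+log⁺L)`-average of `g` over a cube:
`inf {α > 0 : |Q|⁻¹ ∫_Q Φ(g/α) ≤ 1}` (as an element of `ℝ≥0∞`, `= ∞` if no such `α`). -/
def zygAvgE {n : ℕ} (g : Rn n → ℝ≥0∞) (c : Rn n) (h : ℝ) : ℝ≥0∞ :=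
  sInf {a : ℝ≥0∞ | ∃ α : ℝ, 0 < α ∧ a = ENNReal.ofReal α ∧
    (ENNReal.ofReal (h ^ n))⁻¹ * ∫⁻ y in zCube c h, zygFnE (g y / ENNReal.ofReal α) ≤ 1}

/-- The `L(1+log⁺L)`-average of a real function over a cube. -/
def zygAvg {n : ℕ} (f : Rn n → ℝ) (c : Rn n) (h : ℝ) : ℝ≥0∞ :=
  zygAvgE (fun y => ENNReal.ofReal |f y|) c h

/-- The weak `L(1+log⁺L)`-average of `g` over a cube:
`inf {α > 0 : ∀ t > 0, |Q|⁻¹ |{x ∈ Q : g x > α t}| ≤ (1/t)(1 + log⁺(1/t))}`. -/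
def weakZygAvgE {n : ℕ} (g : Rn n → ℝ≥0∞) (c : Rn n) (h : ℝ) : ℝ≥0∞ :=
  sInf {a : ℝ≥0∞ | ∃ α : ℝ, 0 < α ∧ a = ENNReal.ofReal α ∧ ∀ t : ℝ, 0 < t →
    (ENNReal.ofReal (h ^ n))⁻¹ * volume {x ∈ zCube c h | ENNReal.ofReal (α * t) < g x}
      ≤ ENNReal.ofReal ((1 / t) * (1 + logPlus (1 / t)))}

/-- The Zygmund–Morrey norm `sup_Q |Q|^{λ/n} ‖g‖_{L(1+log⁺L),Q}` of an `ℝ≥0∞`-valued function. -/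
def zygMorreyE {n : ℕ} (lam : ℝ) (g : Rn n → ℝ≥0∞) : ℝ≥0∞ :=
  ⨆ (c : Rn n) (h : ℝ) (_ : 0 < h), ENNReal.ofReal (h ^ lam) * zygAvgE g c h

/-- The Zygmund–Morrey norm of a real function. -/
def zygMorrey {n : ℕ} (lam : ℝ) (f : Rn n → ℝ) : ℝ≥0∞ :=
  zygMorreyE lam (fun y => ENNReal.ofReal |f y|)

/-- The weak Zygmund–Morrey norm `sup_Q |Q|^{λ/n} ‖g‖_{WL(1+log⁺L),Q}`. -/
def weakZygMorreyE {n : ℕ} (lam : ℝ) (g : Rn n → ℝ≥0∞) : ℝ≥0∞ :=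
  ⨆ (c : Rn n) (h : ℝ) (_ : 0 < h), ENNReal.ofReal (h ^ lam) * weakZygAvgE g c h

/-- The commutator `[M,b]f(x) = M(bf)(x) - b(x) Mf(x)`. -/
def commMb {n : ℕ} (b f : Rn n → ℝ) (x : Rn n) : ℝ :=
  (HLM (fun y => b y * f y) x).toReal - b x * (HLM f x).toReal

/-- `f` is radially decreasing: `f x = φ ‖x‖` with `φ` nonnegative and
nonincreasing on `(0,∞)`, measurable. -/
def RadDec {n : ℕ} (f : Rn n → ℝ) : Prop :=
  ∃ φ : ℝ → ℝ, Measurable φ ∧ (∀ r : ℝ, 0 < r → 0 ≤ φ r) ∧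
    AntitoneOn φ (Set.Ioi 0) ∧ ∀ x, f x = φ ‖x‖

/-- `∫_Q |f| (1 + log⁺(|f| / |f|_Q))`. -/
def zygInt {n : ℕ} (f : Rn n → ℝ) (c : Rn n) (h : ℝ) : ℝ≥0∞ :=
  ∫⁻ y in zCube c h,
    ENNReal.ofReal (|f y| * (1 + logPlus (|f y| / cubeMean (fun z => |f z|) c h)))

/-- `∫_0^t φ(ρ) ρ^{n-1} dρ`. -/
def radInt1 (n : ℕ) (φ : ℝ → ℝ) (t : ℝ) : ℝ≥0∞ :=
  ∫⁻ ρ in Set.Ioc (0 : ℝ) t, ENNReal.ofReal (φ ρ * ρ ^ (n - 1))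

/-- `∫_0^x (1/t) ∫_0^t φ(ρ) ρ^{n-1} dρ dt`. -/
def radInt2 (n : ℕ) (φ : ℝ → ℝ) (x : ℝ) : ℝ≥0∞ :=
  ∫⁻ t in Set.Ioc (0 : ℝ) x, (ENNReal.ofReal t)⁻¹ * radInt1 n φ t

/-- `∫_0^x (1/y) ∫_0^y (1/t) ∫_0^t φ(ρ) ρ^{n-1} dρ dt dy`. -/
def radInt3 (n : ℕ) (φ : ℝ → ℝ) (x : ℝ) : ℝ≥0∞ :=
  ∫⁻ y in Set.Ioc (0 : ℝ) x, (ENNReal.ofReal y)⁻¹ * radInt2 n φ y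

/-- `sup_{x>0} x^{λ-n} ∫_0^x (1/t) ∫_0^t φ(ρ) ρ^{n-1} dρ dt`. -/
def radSup2 (n : ℕ) (lam : ℝ) (φ : ℝ → ℝ) : ℝ≥0∞ :=
  ⨆ (x : ℝ) (_ : 0 < x), ENNReal.ofReal (x ^ (lam - (n : ℝ))) * radInt2 n φ x

/-- `sup_{x>0} x^{λ-n} ∫_0^x (1/y) ∫_0^y (1/t) ∫_0^t φ(ρ) ρ^{n-1} dρ dt dy`. -/
def radSup3 (n : ℕ) (lam : ℝ) (φ : ℝ → ℝ) : ℝ≥0∞ :=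
  ⨆ (x : ℝ) (_ : 0 < x), ENNReal.ofReal (x ^ (lam - (n : ℝ))) * radInt3 n φ x
/-!
For radially decreasing `f` and `x ≠ 0`, a cube containing `x` is either large compared with
`‖x‖`, and then lies in a centred cube of comparable size, or small, and then `|f|` on it is
dominated by the average of `|f|` over the centred cube of side `‖x‖ / √n`. Since centred averages
are controlled by the Zygmund–Morrey norm, `Mf(x) ≲ ‖x‖^{-λ} ‖f‖`. It remains to see that
`‖·‖^{-λ}` has finite Zygmund–Morrey norm: on a cube of side `h`, `Φ((h/‖y‖)^λ)` is at most `1`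
outside the ball of radius `h` and `≲ (h/‖y‖)^μ` inside it for `λ < μ < n`, and the integral of
`(h/‖y‖)^μ` over that ball is a finite multiple of `h^n` by scaling.
-/

lemma zCube_eq_preimage_pi {n : ℕ} (c : Rn n) (h : ℝ) :
    zCube c h = (MeasurableEquiv.toLp 2 (Fin n → ℝ)).symm ⁻¹'
      univ.pi fun i => Icc (c i - h / 2) (c i + h / 2) := by
  ext x
  simp only [zCube, mem_ofPred_eq, mem_preimage, mem_univ_pi, mem_Icc, abs_le]
  refine forall_congr' fun i => ?_
  change _ ↔ _ ≤ x i ∧ x i ≤ _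
  constructor <;> rintro ⟨h1, h2⟩ <;> constructor <;> linarith

lemma measurableSet_zCube {n : ℕ} (c : Rn n) (h : ℝ) : MeasurableSet (zCube c h) := by
  rw [zCube_eq_preimage_pi]
  exact (MeasurableEquiv.toLp 2 (Fin n → ℝ)).symm.measurable
    (MeasurableSet.univ_pi fun _ => measurableSet_Icc)

lemma volume_zCube {n : ℕ} (c : Rn n) {h : ℝ} (hh : 0 ≤ h) :
    volume (zCube c h) = ENNReal.ofReal (h ^ n) := by
  rw [zCube_eq_preimage_pi,
    (EuclideanSpace.volume_preserving_symm_measurableEquiv_toLp (Fin n)).measure_preimage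
      (MeasurableSet.univ_pi fun _ => measurableSet_Icc).nullMeasurableSet,
    volume_pi_pi]
  simp only [Real.volume_Icc, add_sub_sub_cancel, add_halves, Finset.prod_const,
    Finset.card_univ, Fintype.card_fin, ENNReal.ofReal_pow hh]

lemma norm_le_sqrt_mul_of_forall_abs_le {n : ℕ} {v : Rn n} {M : ℝ} (hM : 0 ≤ M)
    (hv : ∀ i, |v i| ≤ M) : ‖v‖ ≤ √n * M := by
  rw [EuclideanSpace.norm_eq, ← Real.sqrt_sq hM, ← Real.sqrt_mul (Nat.cast_nonneg n)]
  refine Real.sqrt_le_sqrt ?_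
  calc ∑ i, ‖v i‖ ^ 2 ≤ ∑ _i : Fin n, M ^ 2 := by
        gcongr with i
        exact hv i
    _ = n * M ^ 2 := by simp

lemma zCube_subset_closedBall {n : ℕ} (c : Rn n) {h : ℝ} (hh : 0 ≤ h) :
    zCube c h ⊆ Metric.closedBall c (√n * h / 2) := fun y hy => by
  rw [Metric.mem_closedBall, dist_eq_norm, mul_div_assoc]
  exact norm_le_sqrt_mul_of_forall_abs_le (by positivity) hy

lemma zCube_subset_zCube_zero {n : ℕ} {x c : Rn n} {h : ℝ} (hx : x ∈ zCube c h) :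
    zCube c h ⊆ zCube 0 (2 * (‖x‖ + h)) := fun y hy i => by
  have hxi : |x i| ≤ ‖x‖ := PiLp.norm_apply_le x i
  have hyi : |y i| ≤ |y i - c i| + |c i - x i| + |x i| := by
    simpa using abs_add_three (y i - c i) (c i - x i) (x i)
  have hxc : |x i - c i| ≤ h / 2 := hx i
  have hyc : |y i - c i| ≤ h / 2 := hy i
  rw [abs_sub_comm] at hxc
  change |y i - 0| ≤ _
  rw [sub_zero]
  linarith

lemma setLAverage_zCube {n : ℕ} (g : Rn n → ℝ≥0∞) (c : Rn n) {h : ℝ} (hh : 0 < h) :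
    ⨍⁻ y in zCube c h, g y ∂volume = (ENNReal.ofReal (h ^ n))⁻¹ * ∫⁻ y in zCube c h, g y := by
  rw [setLAverage_eq, volume_zCube c hh.le, ENNReal.div_eq_inv_mul]

lemma maxE_le {n : ℕ} {g : Rn n → ℝ≥0∞} {x : Rn n} {B : ℝ≥0∞}
    (hB : ∀ c h, 0 < h → x ∈ zCube c h → ⨍⁻ y in zCube c h, g y ∂volume ≤ B) : maxE g x ≤ B := by
  refine iSup_le fun c => iSup_le fun h => iSup_le fun hh => iSup_le fun hx => ?_
  rw [← setLAverage_zCube g c hh]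
  exact hB c h hh hx

lemma setLAverage_zCube_le_of_subset {n : ℕ} (g : Rn n → ℝ≥0∞) {c c' : Rn n} {h h' : ℝ}
    (hh : 0 < h) (hh' : 0 < h') (hsub : zCube c h ⊆ zCube c' h') :
    ⨍⁻ y in zCube c h, g y ∂volume
      ≤ ENNReal.ofReal ((h' / h) ^ n) * ⨍⁻ y in zCube c' h', g y ∂volume := by
  rw [setLAverage_zCube g c hh, setLAverage_zCube g c' hh', div_pow,
    ENNReal.ofReal_div_of_pos (by positivity), ENNReal.div_eq_inv_mul, mul_assoc,
    ← mul_assoc (ENNReal.ofReal (h' ^ n)),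
    ENNReal.mul_inv_cancel (by simp; positivity) ENNReal.ofReal_ne_top, one_mul]
  gcongr

lemma setLAverage_zCube_le_of_forall_le {n : ℕ} {g : Rn n → ℝ≥0∞} {c : Rn n} {h : ℝ}
    (hh : 0 < h) {b : ℝ≥0∞} (hb : ∀ y ∈ zCube c h, g y ≤ b) :
    ⨍⁻ y in zCube c h, g y ∂volume ≤ b := by
  have hvol := volume_zCube c hh.le
  calc ⨍⁻ y in zCube c h, g y ∂volume ≤ ⨍⁻ _ in zCube c h, b ∂volume :=
        laverage_mono_ae ((ae_restrict_iff' (measurableSet_zCube c h)).2 (.of_forall hb))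
    _ = b := setLAverage_const (by simp [hvol]; positivity) (by simp [hvol]) b

lemma le_setLAverage_zCube_of_ae_le {n : ℕ} {g : Rn n → ℝ≥0∞} {c : Rn n} {h : ℝ}
    (hh : 0 < h) {b : ℝ≥0∞} (hb : ∀ᵐ y ∂volume.restrict (zCube c h), b ≤ g y) :
    b ≤ ⨍⁻ y in zCube c h, g y ∂volume := by
  have hvol := volume_zCube c hh.le
  calc b = ⨍⁻ _ in zCube c h, b ∂volume :=
        (setLAverage_const (by simp [hvol]; positivity) (by simp [hvol]) b).symm
    _ ≤ ⨍⁻ y in zCube c h, g y ∂volume := laverage_mono_ae hb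

lemma logPlus_nonneg (t : ℝ) : 0 ≤ logPlus t := le_max_right _ _

lemma logPlus_mono {u v : ℝ} (hu : 0 ≤ u) (huv : u ≤ v) : logPlus u ≤ logPlus v := by
  rcases hu.eq_or_lt with rfl | hu
  · simp [logPlus]
  · exact max_le_max (Real.log_le_log hu huv) le_rfl

lemma logPlus_eq_zero {t : ℝ} (ht0 : 0 ≤ t) (ht : t ≤ 1) : logPlus t = 0 :=
  max_eq_right (Real.log_nonpos ht0 ht)

lemma logPlus_eq_log {t : ℝ} (ht : 1 ≤ t) : logPlus t = Real.log t :=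
  max_eq_left (Real.log_nonneg ht)

lemma le_zygFnE (t : ℝ≥0∞) : t ≤ zygFnE t :=
  le_mul_of_one_le_right' le_self_add

lemma zygFnE_mono : Monotone zygFnE := by
  intro s t hst
  rcases eq_or_ne t ⊤ with rfl | ht
  · rcases eq_or_ne s ⊤ with rfl | hs
    · exact le_rfl
    · simp [zygFnE]
  · unfold zygFnE
    gcongr
    exact logPlus_mono ENNReal.toReal_nonneg (ENNReal.toReal_mono ht hst)

lemma zygFnE_ofReal {u : ℝ} (hu : 0 ≤ u) :
    zygFnE (ENNReal.ofReal u) = ENNReal.ofReal (u * (1 + logPlus u)) := by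
  rw [zygFnE, ENNReal.toReal_ofReal hu, ENNReal.ofReal_mul hu,
    ENNReal.ofReal_add zero_le_one (logPlus_nonneg u), ENNReal.ofReal_one]

lemma mul_one_add_logPlus_le_one {u : ℝ} (hu0 : 0 ≤ u) (hu1 : u ≤ 1) :
    u * (1 + logPlus u) ≤ 1 := by
  simpa [logPlus_eq_zero hu0 hu1] using hu1

lemma mul_mul_one_add_logPlus_le {a u : ℝ} (ha0 : 0 ≤ a) (ha1 : a ≤ 1) (hu : 0 ≤ u) :
    a * u * (1 + logPlus (a * u)) ≤ a * (u * (1 + logPlus u)) := by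
  have : logPlus (a * u) ≤ logPlus u :=
    logPlus_mono (by positivity) (mul_le_of_le_one_left hu ha1)
  rw [mul_assoc]
  gcongr

lemma rpow_mul_one_add_logPlus_rpow_le {lam θ t : ℝ} (hlam : 0 ≤ lam) (hθ : 0 < θ) (ht : 1 ≤ t) :
    t ^ lam * (1 + logPlus (t ^ lam)) ≤ (1 + lam / θ) * t ^ (lam + θ) := by
  have ht0 : 0 < t := one_pos.trans_le ht
  have htθ : 0 < t ^ θ := Real.rpow_pos_of_pos ht0 θ
  -- `log t ≤ t^θ / θ` is `log s ≤ s - 1` at `s = t^θ`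
  have hlog : Real.log t ≤ t ^ θ / θ := by
    have := Real.log_le_sub_one_of_pos htθ
    rw [Real.log_rpow ht0] at this
    rw [le_div_iff₀ hθ]
    linarith
  have hone : 1 ≤ t ^ θ := Real.one_le_rpow ht hθ.le
  rw [logPlus_eq_log (Real.one_le_rpow ht hlam), Real.log_rpow ht0, Real.rpow_add ht0]
  have : 1 + lam * Real.log t ≤ (1 + lam / θ) * t ^ θ := by
    have := mul_le_mul_of_nonneg_left hlog hlam
    have e : (1 + lam / θ) * t ^ θ = t ^ θ + lam * (t ^ θ / θ) := by ring
    linarith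
  calc t ^ lam * (1 + lam * Real.log t) ≤ t ^ lam * ((1 + lam / θ) * t ^ θ) := by gcongr
    _ = _ := by ring

lemma setLAverage_zCube_le_zygAvgE {n : ℕ} (g : Rn n → ℝ≥0∞) (c : Rn n) {h : ℝ} (hh : 0 < h) :
    ⨍⁻ y in zCube c h, g y ∂volume ≤ zygAvgE g c h := by
  refine le_sInf ?_
  rintro a ⟨α, hα, rfl, hcond⟩
  have hα' : ENNReal.ofReal α ≠ 0 := (ENNReal.ofReal_pos.2 hα).ne'
  have hdiv : ∫⁻ y in zCube c h, g y / ENNReal.ofReal α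
      = (∫⁻ y in zCube c h, g y) / ENNReal.ofReal α := by
    simp_rw [div_eq_mul_inv]
    exact lintegral_mul_const' _ _ (ENNReal.inv_ne_top.2 hα')
  have hle : (ENNReal.ofReal (h ^ n))⁻¹ * ∫⁻ y in zCube c h, g y / ENNReal.ofReal α ≤ 1 :=
    le_trans (by gcongr with y; exact le_zygFnE _) hcond
  rw [hdiv, ← mul_div_assoc, ENNReal.div_le_iff hα' ENNReal.ofReal_ne_top,
    one_mul] at hle
  rwa [setLAverage_zCube g c hh]

lemma setLAverage_zCube_le_zygMorreyE {n : ℕ} (lam : ℝ) (g : Rn n → ℝ≥0∞) (c : Rn n) {h : ℝ}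
    (hh : 0 < h) :
    ⨍⁻ y in zCube c h, g y ∂volume ≤ ENNReal.ofReal (h ^ (-lam)) * zygMorreyE lam g := by
  have hpos : 0 < h ^ lam := Real.rpow_pos_of_pos hh lam
  rw [Real.rpow_neg hh.le, ENNReal.ofReal_inv_of_pos hpos, ← ENNReal.div_eq_inv_mul,
    ENNReal.le_div_iff_mul_le (Or.inl (ENNReal.ofReal_pos.2 hpos).ne') (by simp), mul_comm]
  calc ENNReal.ofReal (h ^ lam) * ⨍⁻ y in zCube c h, g y ∂volume
      ≤ ENNReal.ofReal (h ^ lam) * zygAvgE g c h := by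
        gcongr; exact setLAverage_zCube_le_zygAvgE g c hh
    _ ≤ zygMorreyE lam g := le_iSup_of_le c (le_iSup_of_le h (le_iSup_of_le hh le_rfl))

lemma zygAvgE_le_ofReal {n : ℕ} {g : Rn n → ℝ≥0∞} {c : Rn n} {h x : ℝ} (hh : 0 < h)
    (hx : 0 ≤ x)
    (H : ∀ α, x < α →
      ∫⁻ y in zCube c h, zygFnE (g y / ENNReal.ofReal α) ≤ ENNReal.ofReal (h ^ n)) :
    zygAvgE g c h ≤ ENNReal.ofReal x := by
  refine ENNReal.le_of_forall_pos_le_add fun ε hε _ => ?_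
  have hxε : x < x + ε := by simpa using hε
  rw [← ENNReal.ofReal_coe_nnreal, ← ENNReal.ofReal_add hx (NNReal.coe_nonneg ε)]
  refine sInf_le ⟨x + ε, by positivity, rfl, ?_⟩
  rw [ENNReal.inv_mul_le_iff (by simp; positivity) ENNReal.ofReal_ne_top, mul_one]
  exact H _ hxε

section Scaling

variable {E : Type*} [NormedAddCommGroup E] [NormedSpace ℝ E] [FiniteDimensional ℝ E]
  [MeasurableSpace E] [BorelSpace E] (μ : Measure E) [μ.IsAddHaarMeasure]

lemma lintegral_comp_inv_smul (f : E → ℝ≥0∞) {R : ℝ} (hR : 0 < R) :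
    ∫⁻ x, f (R⁻¹ • x) ∂μ = ENNReal.ofReal (R ^ Module.finrank ℝ E) * ∫⁻ x, f x ∂μ := by
  have hR' : R⁻¹ ≠ 0 := inv_ne_zero hR.ne'
  let e : E ≃ᵐ E := (Homeomorph.smul (isUnit_iff_ne_zero.2 hR').unit).toMeasurableEquiv
  calc ∫⁻ x, f (R⁻¹ • x) ∂μ = ∫⁻ x, f (e x) ∂μ := rfl
    _ = ∫⁻ x, f x ∂(Measure.map (R⁻¹ • ·) μ) := (lintegral_map_equiv f e).symm
    _ = _ := by
      rw [Measure.map_addHaar_smul μ hR', lintegral_smul_measure, inv_pow, inv_inv,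
        abs_of_pos (by positivity), smul_eq_mul]

lemma lintegral_ball_div_norm_rpow (s : ℝ) {R : ℝ} (hR : 0 < R) :
    ∫⁻ y in Metric.ball 0 R, ENNReal.ofReal ((R / ‖y‖) ^ s) ∂μ
      = ENNReal.ofReal (R ^ Module.finrank ℝ E)
        * ∫⁻ z in Metric.ball 0 1, ENNReal.ofReal (‖z‖ ^ (-s)) ∂μ := by
  rw [← lintegral_indicator Metric.isOpen_ball.measurableSet,
    ← lintegral_indicator Metric.isOpen_ball.measurableSet, ← lintegral_comp_inv_smul μ _ hR]
  congr 1 with y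
  have hmem : R⁻¹ • y ∈ Metric.ball (0 : E) 1 ↔ y ∈ Metric.ball 0 R := by
    simp only [mem_ball_zero_iff, norm_smul, norm_inv, Real.norm_of_nonneg hR.le,
      inv_mul_lt_iff₀ hR, mul_one]
  by_cases hy : y ∈ Metric.ball 0 R
  · rw [indicator_of_mem hy, indicator_of_mem (hmem.2 hy), norm_smul, norm_inv,
      Real.norm_of_nonneg hR.le, Real.rpow_neg (by positivity), ← Real.inv_rpow (by positivity),
      mul_inv, inv_inv, div_eq_mul_inv]
  · rw [indicator_of_notMem hy, indicator_of_notMem (mt hmem.1 hy)]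

lemma lintegral_ball_norm_rpow_neg_lt_top {s : ℝ} (hs0 : 0 ≤ s) (hs : s < Module.finrank ℝ E) :
    ∫⁻ z in Metric.ball 0 1, ENNReal.ofReal (‖z‖ ^ (-s)) ∂μ < ⊤ := by
  have hd : 1 ≤ Module.finrank ℝ E := by exact_mod_cast (hs0.trans_lt hs)
  refine (integrableOn_ball_of_norm_le_rpow (f := fun z : E => ‖z‖ ^ (-s)) (C := 1) hd hs
    (ae_of_all _ fun z => ?_) (measurable_norm.pow_const _).aestronglyMeasurable).lintegral_lt_top
  rw [one_mul, Real.norm_of_nonneg (Real.rpow_nonneg (norm_nonneg z) _)]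

end Scaling

lemma zygFnE_div_norm_rpow_le {E : Type*} [NormedAddCommGroup E] {lam θ h : ℝ} (hlam : 0 ≤ lam)
    (hθ : 0 < θ) (hh : 0 < h) (y : E) :
    zygFnE (ENNReal.ofReal ((h / ‖y‖) ^ lam)) ≤ 1 + (Metric.ball 0 h).indicator
      (fun y => ENNReal.ofReal ((1 + lam / θ) * (h / ‖y‖) ^ (lam + θ))) y := by
  have ht0 : 0 ≤ h / ‖y‖ := by positivity
  rw [zygFnE_ofReal (by positivity)]
  rcases le_or_gt (h / ‖y‖) 1 with ht | ht
  · refine le_trans ?_ le_self_add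
    rw [← ENNReal.ofReal_one]
    exact ENNReal.ofReal_le_ofReal
      (mul_one_add_logPlus_le_one (by positivity) (Real.rpow_le_one ht0 ht hlam))
  · have hy0 : 0 < ‖y‖ := by
      by_contra! h0
      linarith [div_nonpos_of_nonneg_of_nonpos hh.le h0]
    have hy : y ∈ Metric.ball 0 h := by
      rwa [mem_ball_zero_iff, ← one_lt_div hy0]
    rw [indicator_of_mem hy]
    exact (ENNReal.ofReal_le_ofReal (rpow_mul_one_add_logPlus_rpow_le hlam hθ ht.le)).trans
      le_add_self

lemma exists_lintegral_zCube_zygFnE_div_norm_rpow_le {n : ℕ} {lam : ℝ} (hlam0 : 0 ≤ lam)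
    (hlamn : lam < n) :
    ∃ K : ℝ, 1 ≤ K ∧ ∀ (c : Rn n) (h : ℝ), 0 < h →
      ∫⁻ y in zCube c h, zygFnE (ENNReal.ofReal ((h / ‖y‖) ^ lam))
        ≤ ENNReal.ofReal (K * h ^ n) := by
  set θ := (n - lam) / 2 with hθdef
  have hθ : 0 < θ := div_pos (sub_pos.2 hlamn) two_pos
  have hfin : Module.finrank ℝ (Rn n) = n := finrank_euclideanSpace_fin
  set I := ∫⁻ z in Metric.ball (0 : Rn n) 1, ENNReal.ofReal (‖z‖ ^ (-(lam + θ)))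
  have hI : I ≠ ⊤ := (lintegral_ball_norm_rpow_neg_lt_top volume (by positivity)
    (by rw [hfin, hθdef]; linarith)).ne
  have hC : 0 ≤ 1 + lam / θ := by positivity
  refine ⟨1 + (1 + lam / θ) * I.toReal, by simp; positivity, fun c h hh => ?_⟩
  calc ∫⁻ y in zCube c h, zygFnE (ENNReal.ofReal ((h / ‖y‖) ^ lam))
      ≤ ∫⁻ y in zCube c h, (1 + (Metric.ball 0 h).indicator
          (fun y => ENNReal.ofReal ((1 + lam / θ) * (h / ‖y‖) ^ (lam + θ))) y) :=
        lintegral_mono fun y => zygFnE_div_norm_rpow_le hlam0 hθ hh y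
    _ ≤ ENNReal.ofReal (h ^ n) + ∫⁻ y : Rn n, (Metric.ball 0 h).indicator
          (fun y => ENNReal.ofReal ((1 + lam / θ) * (h / ‖y‖) ^ (lam + θ))) y := by
        rw [lintegral_add_left measurable_const, setLIntegral_const, one_mul, volume_zCube c hh.le]
        gcongr
        exact Measure.restrict_le_self
    _ = ENNReal.ofReal (h ^ n) + ENNReal.ofReal (1 + lam / θ) * (ENNReal.ofReal (h ^ n) * I) := by
        simp_rw [lintegral_indicator Metric.isOpen_ball.measurableSet, ENNReal.ofReal_mul hC]
        rw [lintegral_const_mul' _ _ ENNReal.ofReal_ne_top,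
          lintegral_ball_div_norm_rpow volume _ hh, hfin]
    _ = ENNReal.ofReal ((1 + (1 + lam / θ) * I.toReal) * h ^ n) := by
        rw [← ENNReal.ofReal_toReal hI, ← ENNReal.ofReal_mul (by positivity),
          ← ENNReal.ofReal_mul hC, ← ENNReal.ofReal_add (by positivity) (by positivity),
          ENNReal.toReal_ofReal ENNReal.toReal_nonneg]
        congr 1
        ring

section PowerBound

variable {n : ℕ} {lam K : ℝ}

lemma zygAvgE_le_of_ae_le_norm_rpow_neg (hK1 : 1 ≤ K)
    (hK : ∀ (c : Rn n) (h : ℝ), 0 < h →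
      ∫⁻ y in zCube c h, zygFnE (ENNReal.ofReal ((h / ‖y‖) ^ lam)) ≤ ENNReal.ofReal (K * h ^ n))
    {g : Rn n → ℝ≥0∞} {β : ℝ} (hβ : 0 ≤ β)
    (hg : ∀ᵐ y, g y ≤ ENNReal.ofReal (β * ‖y‖ ^ (-lam))) (c : Rn n) {h : ℝ} (hh : 0 < h) :
    zygAvgE g c h ≤ ENNReal.ofReal (K * β * h ^ (-lam)) := by
  have hK0 : 0 < K := one_pos.trans_le hK1
  have hhl : 0 < h ^ lam := Real.rpow_pos_of_pos hh lam
  refine zygAvgE_le_ofReal hh (by positivity) fun α hα => ?_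
  have hα0 : 0 < α := lt_of_le_of_lt (by positivity) hα
  have hβα : β ≤ K⁻¹ * h ^ lam * α := by
    rw [Real.rpow_neg hh.le, ← div_eq_mul_inv, div_lt_iff₀ hhl] at hα
    rw [mul_assoc, le_inv_mul_iff₀ hK0]
    linarith
  have hpt : ∀ᵐ y ∂volume.restrict (zCube c h), zygFnE (g y / ENNReal.ofReal α)
      ≤ ENNReal.ofReal K⁻¹ * zygFnE (ENNReal.ofReal ((h / ‖y‖) ^ lam)) := by
    filter_upwards [ae_restrict_of_ae hg] with y hy
    set u := (h / ‖y‖) ^ lam with hudef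
    have hu : 0 ≤ u := by positivity
    have hdiv : g y / ENNReal.ofReal α ≤ ENNReal.ofReal (K⁻¹ * u) := by
      refine (ENNReal.div_le_div_right hy _).trans ?_
      rw [← ENNReal.ofReal_div_of_pos hα0]
      refine ENNReal.ofReal_le_ofReal ?_
      rw [div_le_iff₀ hα0, hudef, Real.div_rpow hh.le (norm_nonneg y),
        Real.rpow_neg (norm_nonneg y), div_eq_mul_inv]
      calc β * (‖y‖ ^ lam)⁻¹ ≤ K⁻¹ * h ^ lam * α * (‖y‖ ^ lam)⁻¹ := by gcongr
        _ = _ := by ring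
    calc zygFnE (g y / ENNReal.ofReal α) ≤ zygFnE (ENNReal.ofReal (K⁻¹ * u)) := zygFnE_mono hdiv
      _ ≤ ENNReal.ofReal K⁻¹ * zygFnE (ENNReal.ofReal u) := by
        rw [zygFnE_ofReal (by positivity), zygFnE_ofReal hu, ← ENNReal.ofReal_mul (by positivity)]
        exact ENNReal.ofReal_le_ofReal
          (mul_mul_one_add_logPlus_le (by positivity) (inv_le_one_of_one_le₀ hK1) hu)
  calc ∫⁻ y in zCube c h, zygFnE (g y / ENNReal.ofReal α)
      ≤ ENNReal.ofReal K⁻¹ * ∫⁻ y in zCube c h, zygFnE (ENNReal.ofReal ((h / ‖y‖) ^ lam)) := by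
        rw [← lintegral_const_mul' _ _ ENNReal.ofReal_ne_top]
        exact lintegral_mono_ae hpt
    _ ≤ ENNReal.ofReal K⁻¹ * ENNReal.ofReal (K * h ^ n) := by gcongr; exact hK c h hh
    _ = ENNReal.ofReal (h ^ n) := by
        rw [← ENNReal.ofReal_mul (by positivity), inv_mul_cancel_left₀ hK0.ne']

lemma zygMorreyE_le_of_ae_le_norm_rpow_neg (hK1 : 1 ≤ K)
    (hK : ∀ (c : Rn n) (h : ℝ), 0 < h →
      ∫⁻ y in zCube c h, zygFnE (ENNReal.ofReal ((h / ‖y‖) ^ lam)) ≤ ENNReal.ofReal (K * h ^ n))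
    {g : Rn n → ℝ≥0∞} {β : ℝ} (hβ : 0 ≤ β)
    (hg : ∀ᵐ y, g y ≤ ENNReal.ofReal (β * ‖y‖ ^ (-lam))) :
    zygMorreyE lam g ≤ ENNReal.ofReal (K * β) := by
  refine iSup_le fun c => iSup_le fun h => iSup_le fun hh => ?_
  calc ENNReal.ofReal (h ^ lam) * zygAvgE g c h
      ≤ ENNReal.ofReal (h ^ lam) * ENNReal.ofReal (K * β * h ^ (-lam)) := by
        gcongr; exact zygAvgE_le_of_ae_le_norm_rpow_neg hK1 hK hβ hg c hh
    _ = ENNReal.ofReal (K * β) := by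
        rw [← ENNReal.ofReal_mul (by positivity), Real.rpow_neg hh.le,
          mul_comm (h ^ lam), mul_assoc, inv_mul_cancel₀ (Real.rpow_pos_of_pos hh lam).ne',
          mul_one]

end PowerBound

lemma ae_ne_zero_of_pos {n : ℕ} (hn : 0 < n) : ∀ᵐ z : Rn n, z ≠ 0 := by
  have : Nonempty (Fin n) := ⟨⟨0, hn⟩⟩
  exact Measure.ae_ne volume 0

lemma RadDec.abs_le_abs {n : ℕ} {f : Rn n → ℝ} (hf : RadDec f) {y z : Rn n} (hz : z ≠ 0)
    (hzy : ‖z‖ ≤ ‖y‖) : |f y| ≤ |f z| := by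
  obtain ⟨φ, -, hφ0, hφ, hfφ⟩ := hf
  have hz' : 0 < ‖z‖ := norm_pos_iff.2 hz
  have hy' : 0 < ‖y‖ := hz'.trans_le hzy
  rw [hfφ, hfφ, abs_of_nonneg (hφ0 _ hy'), abs_of_nonneg (hφ0 _ hz')]
  exact hφ hz' hy' hzy

lemma RadDec.setLAverage_zCube_le_of_far {n : ℕ} (hn : 0 < n) {f : Rn n → ℝ} (hf : RadDec f)
    {x c : Rn n} {h : ℝ} (hh : 0 < h) (hx : x ∈ zCube c h) (hfar : 2 * √n * h < ‖x‖) :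
    ⨍⁻ y in zCube c h, ENNReal.ofReal |f y| ∂volume
      ≤ ⨍⁻ y in zCube 0 (‖x‖ / √n), ENNReal.ofReal |f y| ∂volume := by
  have hsn : 0 < √n := Real.sqrt_pos.2 (by exact_mod_cast hn)
  have hx0 : 0 < ‖x‖ := lt_of_le_of_lt (by positivity) hfar
  refine setLAverage_zCube_le_of_forall_le hh fun y hy =>
    le_setLAverage_zCube_of_ae_le (by positivity) ?_
  -- `zCube c h` stays outside the ball of radius `‖x‖ / 2`, which contains `zCube 0 (‖x‖ / √n)`
  have hxy : ‖x‖ / 2 ≤ ‖y‖ := by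
    have hxc := zCube_subset_closedBall c hh.le hx
    have hyc := zCube_subset_closedBall c hh.le hy
    rw [Metric.mem_closedBall, dist_eq_norm] at hxc hyc
    have := norm_sub_le_norm_sub_add_norm_sub x c y
    rw [norm_sub_rev c y] at this
    linarith [norm_sub_norm_le x y]
  filter_upwards [ae_restrict_mem (measurableSet_zCube 0 _),
    ae_restrict_of_ae (ae_ne_zero_of_pos hn)] with z hz hz0
  have hzx : ‖z‖ ≤ ‖x‖ / 2 := by
    have := zCube_subset_closedBall 0 (by positivity) hz
    rwa [mem_closedBall_zero_iff, mul_div_assoc', mul_div_cancel_left₀ _ hsn.ne'] at this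
  exact ENNReal.ofReal_le_ofReal (hf.abs_le_abs hz0 (hzx.trans hxy))

lemma setLAverage_zCube_le_of_near {n : ℕ} (hn : 0 < n) {lam : ℝ} (hlam : 0 ≤ lam)
    (g : Rn n → ℝ≥0∞) {x c : Rn n} {h : ℝ} (hh : 0 < h) (hx : x ∈ zCube c h) (hx0 : x ≠ 0)
    (hnear : ‖x‖ ≤ 2 * √n * h) :
    ⨍⁻ y in zCube c h, g y ∂volume
      ≤ ENNReal.ofReal ((6 * √n) ^ n * ‖x‖ ^ (-lam)) * zygMorreyE lam g := by
  have hsn : 1 ≤ √n := Real.one_le_sqrt.2 (by exact_mod_cast hn)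
  have hxpos : 0 < ‖x‖ := norm_pos_iff.2 hx0
  set T := 2 * (‖x‖ + h)
  have hT : 0 < T := by positivity
  have hxT : ‖x‖ ≤ T := by simp only [T]; linarith
  have hTh : T / h ≤ 6 * √n := by
    rw [div_le_iff₀ hh]
    nlinarith
  calc ⨍⁻ y in zCube c h, g y ∂volume
      ≤ ENNReal.ofReal ((T / h) ^ n) * ⨍⁻ y in zCube 0 T, g y ∂volume :=
        setLAverage_zCube_le_of_subset g hh hT (zCube_subset_zCube_zero hx)
    _ ≤ ENNReal.ofReal ((T / h) ^ n) * (ENNReal.ofReal (T ^ (-lam)) * zygMorreyE lam g) := by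
        gcongr; exact setLAverage_zCube_le_zygMorreyE lam g 0 hT
    _ ≤ ENNReal.ofReal ((6 * √n) ^ n) * (ENNReal.ofReal (‖x‖ ^ (-lam)) * zygMorreyE lam g) := by
        refine mul_le_mul' (ENNReal.ofReal_le_ofReal (pow_le_pow_left₀ (by positivity) hTh n))
          (mul_le_mul_left (ENNReal.ofReal_le_ofReal ?_) _)
        exact Real.rpow_le_rpow_of_nonpos hxpos hxT (neg_nonpos.2 hlam)
    _ = _ := by rw [← mul_assoc, ← ENNReal.ofReal_mul (by positivity)]

theorem RadDec.HLM_le {n : ℕ} (hn : 0 < n) {lam : ℝ} (hlam : 0 ≤ lam) {f : Rn n → ℝ}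
    (hf : RadDec f) {x : Rn n} (hx : x ≠ 0) :
    HLM f x ≤ ENNReal.ofReal ((6 * √n) ^ n * √n ^ lam * ‖x‖ ^ (-lam)) * zygMorrey lam f := by
  have hsn : 1 ≤ √n := Real.one_le_sqrt.2 (by exact_mod_cast hn)
  have hx0 : 0 < ‖x‖ := norm_pos_iff.2 hx
  refine maxE_le fun c h hh hxQ => ?_
  rcases le_or_gt ‖x‖ (2 * √n * h) with hnear | hfar
  · refine (setLAverage_zCube_le_of_near hn hlam _ hh hxQ hx hnear).trans
      (mul_le_mul_left (ENNReal.ofReal_le_ofReal ?_) _)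
    gcongr
    exact le_mul_of_one_le_right (by positivity) (Real.one_le_rpow hsn hlam)
  · calc ⨍⁻ y in zCube c h, ENNReal.ofReal |f y| ∂volume
        ≤ ⨍⁻ y in zCube 0 (‖x‖ / √n), ENNReal.ofReal |f y| ∂volume :=
          hf.setLAverage_zCube_le_of_far hn hh hxQ hfar
      _ ≤ ENNReal.ofReal ((‖x‖ / √n) ^ (-lam)) * zygMorrey lam f :=
          setLAverage_zCube_le_zygMorreyE lam _ 0 (by positivity)
      _ = ENNReal.ofReal (√n ^ lam * ‖x‖ ^ (-lam)) * zygMorrey lam f := by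
          rw [Real.rpow_neg (div_nonneg hx0.le (Real.sqrt_nonneg _)),
            Real.div_rpow hx0.le (Real.sqrt_nonneg _), inv_div, div_eq_mul_inv,
            Real.rpow_neg hx0.le]
      _ ≤ _ := by
          gcongr
          exact le_mul_of_one_le_left (by positivity) (one_le_pow₀ (by linarith))

/-- Let `0 < λ < n`. The Hardy–Littlewood maximal operator is bounded on the
Zygmund–Morrey space `M_{L(1+log⁺L),λ}(ℝⁿ)` restricted to radially decreasing functions:
`‖Mf‖_{M_{L(1+log⁺L),λ}} ≤ c ‖f‖_{M_{L(1+log⁺L),λ}}`. -/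
theorem stmt14 (n : ℕ) (hn : 0 < n) (lam : ℝ) (hlam0 : 0 < lam) (hlamn : lam < (n : ℝ)) :
    ∃ c : ℝ, 0 < c ∧ ∀ f : Rn n → ℝ, RadDec f →
      zygMorreyE lam (HLM f) ≤ ENNReal.ofReal c * zygMorrey lam f := by
  obtain ⟨K, hK1, hK⟩ := exists_lintegral_zCube_zygFnE_div_norm_rpow_le hlam0.le hlamn
  set C := (6 * √n) ^ n * √n ^ lam
  refine ⟨K * C, by positivity, fun f hf => ?_⟩
  by_cases hN : zygMorrey lam f = ⊤
  · rw [hN, ENNReal.mul_top (by simp; positivity)]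
    exact le_top
  have hM : ∀ᵐ y, HLM f y ≤ ENNReal.ofReal (C * (zygMorrey lam f).toReal * ‖y‖ ^ (-lam)) := by
    filter_upwards [ae_ne_zero_of_pos hn] with y hy
    refine (hf.HLM_le hn hlam0.le hy).trans_eq ?_
    rw [← ENNReal.ofReal_toReal hN, ← ENNReal.ofReal_mul (by positivity), ENNReal.toReal_ofReal
      ENNReal.toReal_nonneg, mul_right_comm]
  calc zygMorreyE lam (HLM f) ≤ ENNReal.ofReal (K * (C * (zygMorrey lam f).toReal)) :=
        zygMorreyE_le_of_ae_le_norm_rpow_neg hK1 hK (by positivity) hM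
    _ = ENNReal.ofReal (K * C) * zygMorrey lam f := by
        rw [← mul_assoc, ENNReal.ofReal_mul (by positivity), ENNReal.ofReal_toReal hN]
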